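/- arXiv:0809.1204 — 6 statements merged into one kernel-verified Lean document; each statement's English description precedes it below -/
import Mathlib

section
/- For any prescribed tuple of monic polynomials P_1, ..., P_n over ℂ with deg P_m = m, there exists exactly one unit upper Hessenberg matrix H ∈ M(n, ℂ) such that the characteristic polynomial of the leading principal m×m submatrix H_m equals P_m for every 1 ≤ m ≤ n. -/
open Matrix Polynomial

/-- Leading principal `m × m` submatrix. -/
def lead {n : ℕ} (x : Matrix (Fin n) (Fin n) ℂ) (m : ℕ) (h : m ≤ n) :
    Matrix (Fin m) (Fin m) ℂ :=
  x.submatrix (Fin.castLE h) (Fin.castLE h)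

/-- `H` is unit upper Hessenberg: zero below the subdiagonal, ones on the subdiagonal. -/
def IsUnitUpperHessenberg {n : ℕ} (H : Matrix (Fin n) (Fin n) ℂ) : Prop :=
  (∀ i j : Fin n, j.val + 1 < i.val → H i j = 0) ∧
  (∀ i j : Fin n, i.val = j.val + 1 → H i j = 1)

lemma charmatrix_lead {n m : ℕ} (A : Matrix (Fin n) (Fin n) ℂ) (h : m ≤ n) :
    charmatrix (lead A m h) = (charmatrix A).submatrix (Fin.castLE h) (Fin.castLE h) := by
  ext i j
  by_cases hij : i = j
  · subst hij; simp [charmatrix_apply_eq, lead]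
  · have : Fin.castLE h i ≠ Fin.castLE h j := fun hc => hij (Fin.castLE_injective h hc)
    simp [charmatrix_apply_ne _ _ _ hij, charmatrix_apply_ne _ _ _ this, lead]

lemma hess_lead {n m : ℕ} {A : Matrix (Fin n) (Fin n) ℂ} (hA : IsUnitUpperHessenberg A)
    (h : m ≤ n) : IsUnitUpperHessenberg (lead A m h) := by
  refine ⟨fun i j hij => hA.1 _ _ ?_, fun i j hij => hA.2 _ _ ?_⟩ <;> simpa using hij

lemma lead_lead {n m k : ℕ} (A : Matrix (Fin n) (Fin n) ℂ) (h : m ≤ n) (h2 : k ≤ m) :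
    lead (lead A m h) k h2 = lead A k (h2.trans h) := by
  ext i j; simp [lead]

lemma castLE_eq_castSucc {m : ℕ} (x : Fin (m+1)) (h : m+1 ≤ m+2) :
    Fin.castLE h x = Fin.castSucc x := rfl

lemma hess_minor_det : ∀ (m : ℕ) (A : Matrix (Fin (m+1)) (Fin (m+1)) ℂ),
    IsUnitUpperHessenberg A → ∀ (i : Fin (m+1)),
    ((charmatrix A).submatrix i.succAbove Fin.castSucc).det
      = (-1)^(m - i.val) * (lead A i.val (by omega)).charpoly := by
  intro m
  induction m with
  | zero =>
    intro A hA i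
    have : i = 0 := Fin.ext (by omega)
    subst this
    simp [Matrix.charpoly, Matrix.det_isEmpty]
  | succ m IH =>
    intro A hA i
    by_cases hlast : i = Fin.last (m+1)
    · subst hlast
      rw [Fin.succAbove_last]
      have : (charmatrix A).submatrix Fin.castSucc Fin.castSucc
          = charmatrix (lead A (m+1) (by omega)) := by
        rw [charmatrix_lead]; rfl
      rw [this]
      simp [Matrix.charpoly, Fin.val_last]
    · obtain ⟨j, rfl⟩ : ∃ j : Fin (m+1), i = Fin.castSucc j := by
        rcases Fin.eq_castSucc_or_eq_last i with h | h
        · exact h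
        · exact absurd h hlast
      set M := (charmatrix A).submatrix (Fin.castSucc j).succAbove Fin.castSucc with hM
      rw [Matrix.det_succ_row M (Fin.last m)]
      have hrow : ∀ c : Fin (m+1), c ≠ Fin.last m → M (Fin.last m) c = 0 := by
        intro c hc
        have h1 : (Fin.castSucc j).succAbove (Fin.last m) = Fin.last (m+1) := by
          rw [Fin.succAbove_castSucc_of_le _ _ (Fin.le_last j)]; rfl
        have hne : (Fin.last (m+1) : Fin (m+2)) ≠ Fin.castSucc c := by
          intro h; apply hc
          have := congrArg Fin.val h
          simp at this
          exact Fin.ext (by omega)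
        simp only [hM, Matrix.submatrix_apply, h1, charmatrix_apply_ne _ _ _ hne]
        have : A (Fin.last (m+1)) (Fin.castSucc c) = 0 := by
          apply hA.1
          have : c.val < m := by
            rcases lt_or_eq_of_le (Fin.le_last c) with h | h
            · simpa [Fin.lt_def] using h
            · exact absurd h hc
          simpa using by omega
        simp [this]
      rw [Finset.sum_eq_single_of_mem (Fin.last m) (Finset.mem_univ _)
        (by intro c _ hc; rw [hrow c hc]; ring)]
      have hMll : M (Fin.last m) (Fin.last m) = -1 := by
        have h1 : (Fin.castSucc j).succAbove (Fin.last m) = Fin.last (m+1) := by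
          rw [Fin.succAbove_castSucc_of_le _ _ (Fin.le_last j)]; rfl
        have hne : (Fin.last (m+1) : Fin (m+2)) ≠ Fin.castSucc (Fin.last m) := by
          intro h; have := congrArg Fin.val h; simp at this
        simp only [hM, Matrix.submatrix_apply, h1, charmatrix_apply_ne _ _ _ hne]
        have : A (Fin.last (m+1)) (Fin.castSucc (Fin.last m)) = 1 := by
          apply hA.2; simp
        simp [this]
      have hsub : M.submatrix (Fin.last m).succAbove (Fin.last m).succAbove
          = (charmatrix (lead A (m+1) (by omega))).submatrix j.succAbove Fin.castSucc := by
        ext r c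
        simp only [hM, Matrix.submatrix_apply, Fin.succAbove_last, charmatrix_lead,
          Fin.castSucc_succAbove_castSucc]
        rfl
      rw [hMll, hsub, IH _ (hess_lead hA (by omega)) j, lead_lead]
      have hj : j.val ≤ m := by omega
      have : (m + 1 : ℕ) - (Fin.castSucc j).val = (m - j.val) + 1 := by
        simp only [Fin.coe_castSucc]; omega
      rw [this]
      simp only [Fin.val_last, Fin.coe_castSucc]
      have h2 : ((-1 : ℂ[X]))^(m+m) = 1 := by rw [← two_mul, pow_mul]; simp
      rw [h2, pow_succ]
      ring

lemma hess_charpoly_rec (m : ℕ) (A : Matrix (Fin (m+1)) (Fin (m+1)) ℂ)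
    (hA : IsUnitUpperHessenberg A) :
    A.charpoly = (X - C (A (Fin.last m) (Fin.last m))) * (lead A m (by omega)).charpoly
      - ∑ i : Fin m, C (A (Fin.castSucc i) (Fin.last m)) * (lead A i.val (by omega)).charpoly := by
  have hterm : ∀ i : Fin (m+1),
      (-1:ℂ[X])^((i:ℕ) + ((Fin.last m : Fin (m+1)) : ℕ)) * charmatrix A i (Fin.last m)
        * ((charmatrix A).submatrix i.succAbove (Fin.last m).succAbove).det
      = charmatrix A i (Fin.last m) * (lead A i.val (by omega)).charpoly := by
    intro i
    rw [Fin.succAbove_last, hess_minor_det m A hA i]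
    have hpow : (-1:ℂ[X])^((i:ℕ) + ((Fin.last m : Fin (m+1)) : ℕ)) * (-1)^(m - i.val) = 1 := by
      rw [← pow_add, Fin.val_last, show i.val + m + (m - i.val) = 2*m from by omega, pow_mul]
      simp
    calc (-1:ℂ[X])^((i:ℕ) + ((Fin.last m : Fin (m+1)) : ℕ)) * charmatrix A i (Fin.last m)
          * ((-1)^(m - i.val) * (lead A i.val (by omega)).charpoly)
        = ((-1:ℂ[X])^((i:ℕ) + ((Fin.last m : Fin (m+1)) : ℕ)) * (-1)^(m - i.val))
            * (charmatrix A i (Fin.last m) * (lead A i.val (by omega)).charpoly) := by ring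
      _ = _ := by rw [hpow, one_mul]
  rw [Matrix.charpoly, Matrix.det_succ_column (charmatrix A) (Fin.last m),
    Finset.sum_congr rfl (fun i _ => hterm i), Fin.sum_univ_castSucc]
  have hlast : charmatrix A (Fin.last m) (Fin.last m) = X - C (A (Fin.last m) (Fin.last m)) := by
    simp [charmatrix_apply_eq]
  have hcs : ∀ i : Fin m, charmatrix A (Fin.castSucc i) (Fin.last m)
      = -C (A (Fin.castSucc i) (Fin.last m)) := by
    intro i
    have : (Fin.castSucc i : Fin (m+1)) ≠ Fin.last m := by
      intro h; have := congrArg Fin.val h; simp at this; omega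
    rw [charmatrix_apply_ne _ _ _ this]
  rw [hlast]
  simp only [Fin.coe_castSucc, Fin.val_last]
  rw [Finset.sum_congr rfl (fun i _ => by rw [hcs i])]
  have : ∑ i : Fin m, -C (A (Fin.castSucc i) (Fin.last m)) * (lead A i.val (by omega)).charpoly
      = -∑ i : Fin m, C (A (Fin.castSucc i) (Fin.last m)) * (lead A i.val (by omega)).charpoly := by
    rw [← Finset.sum_neg_distrib]
    exact Finset.sum_congr rfl (fun i _ => by ring)
  rw [this]
  ring

lemma exists_unique_coeffs : ∀ (n : ℕ) (Q : Fin (n+1) → Polynomial ℂ),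
    (∀ i : Fin (n+1), (Q i).Monic ∧ (Q i).natDegree = i.val) →
    ∀ p : Polynomial ℂ, p.degree < (n+1 : ℕ) →
    ∃! c : Fin (n+1) → ℂ, ∑ i, C (c i) * Q i = p := by
  intro n
  induction n with
  | zero =>
    intro Q hQ p hp
    have hQ0 : Q 0 = 1 := ((hQ 0).1.natDegree_eq_zero).mp (by simp [(hQ 0).2])
    have hpc : p = C (p.coeff 0) := Polynomial.eq_C_of_degree_le_zero
      (Nat.WithBot.lt_one_iff_le_zero.mp (by simpa using hp))
    refine ⟨fun _ => p.coeff 0, ?_, ?_⟩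
    · simp [hQ0, ← hpc]
    · intro d hd
      funext i
      have : i = 0 := Fin.ext (by omega)
      subst this
      have := hd
      rw [Fin.sum_univ_one, hQ0, mul_one] at this
      rw [hpc] at this ⊢
      simpa using C_injective this
  | succ n IH =>
    intro Q hQ p hp
    set t := p.coeff (n+1) with ht
    have hQl : (Q (Fin.last (n+1))).natDegree = n + 1 := by simpa using (hQ (Fin.last (n+1))).2
    have hQlc : (Q (Fin.last (n+1))).coeff (n+1) = 1 := by
      have := (hQ (Fin.last (n+1))).1.coeff_natDegree
      rwa [hQl] at this
    set p' := p - C t * Q (Fin.last (n+1)) with hp'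
    have hp'deg : p'.degree < (n+1 : ℕ) := by
      rw [Polynomial.degree_lt_iff_coeff_zero]
      intro k hk
      have hk' : (n+1 : ℕ) ≤ k := by exact_mod_cast hk
      rcases eq_or_lt_of_le hk' with h | h
      · simp [hp', coeff_C_mul, ← h, hQlc, ht]
      · have h1 : p.coeff k = 0 := by
          apply Polynomial.coeff_eq_zero_of_degree_lt
          exact lt_of_lt_of_le hp (by exact_mod_cast Nat.cast_le.mpr h)
        have h2 : (Q (Fin.last (n+1))).coeff k = 0 :=
          Polynomial.coeff_eq_zero_of_natDegree_lt (by omega)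
        simp [hp', coeff_C_mul, h1, h2]
    have hQ' : ∀ i : Fin (n+1), (Q i.castSucc).Monic ∧ (Q i.castSucc).natDegree = i.val := by
      intro i; simpa using hQ i.castSucc
    obtain ⟨c', hc', huniq⟩ := IH (fun i => Q i.castSucc) hQ' p' hp'deg
    refine ⟨Fin.snoc c' t, ?_, ?_⟩
    · show ∑ i : Fin (n+2), C ((Fin.snoc c' t : Fin (n+2) → ℂ) i) * Q i = p
      rw [Fin.sum_univ_castSucc]
      simp only [Fin.snoc_castSucc, Fin.snoc_last]
      rw [hc']
      simp [hp']
    · intro d hd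
      have hdl : d (Fin.last (n+1)) = t := by
        have hco := congrArg (fun q => Polynomial.coeff q (n+1)) hd
        simp only [Polynomial.finset_sum_coeff, coeff_C_mul] at hco
        rw [Fin.sum_univ_castSucc] at hco
        have hz : ∀ i : Fin (n+1), (Q i.castSucc).coeff (n+1) = 0 := fun i =>
          Polynomial.coeff_eq_zero_of_natDegree_lt (by
            have := (hQ' i).2; omega)
        simp only [hz, mul_zero, Finset.sum_const_zero, zero_add, hQlc, mul_one] at hco
        exact hco
      have hdc : (fun i : Fin (n+1) => d i.castSucc) = c' := by
        apply huniq
        rw [hp', ← hd, Fin.sum_univ_castSucc (f := fun i : Fin (n+2) => C (d i) * Q i), hdl]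
        ring
      funext i
      rcases Fin.eq_castSucc_or_eq_last i with ⟨j, rfl⟩ | rfl
      · rw [Fin.snoc_castSucc, ← hdc]
      · rw [Fin.snoc_last, hdl]

lemma lead_self {N : ℕ} (A : Matrix (Fin N) (Fin N) ℂ) (h : N ≤ N) : lead A N h = A := by
  ext i j
  show A (Fin.castLE h i) (Fin.castLE h j) = A i j
  congr 1 <;> exact Fin.ext rfl

lemma charpoly_fin_zero (A : Matrix (Fin 0) (Fin 0) ℂ) : A.charpoly = 1 := by
  simp [Matrix.charpoly]

/-- For any prescribed monic polynomials `P m` of degree `m + 1`, there is exactly one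
unit upper Hessenberg matrix whose leading principal submatrices have those
characteristic polynomials. -/
theorem existsUnique_unit_upper_hessenberg {n : ℕ} (P : Fin n → Polynomial ℂ)
    (hP : ∀ m : Fin n, (P m).Monic ∧ (P m).natDegree = m.val + 1) :
    ∃! H : Matrix (Fin n) (Fin n) ℂ, IsUnitUpperHessenberg H ∧
      ∀ m : Fin n, (lead H (m.val + 1) m.isLt).charpoly = P m := by
  induction n with
  | zero =>
    refine ⟨0, ⟨⟨fun i _ _ => i.elim0, fun i _ _ => i.elim0⟩, fun m => m.elim0⟩,
      fun K _ => ?_⟩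
    ext i j
    exact i.elim0
  | succ n IH =>
    have hP' : ∀ m : Fin n, (P m.castSucc).Monic ∧ (P m.castSucc).natDegree = m.val + 1 := by
      intro m; simpa using hP m.castSucc
    obtain ⟨H', ⟨hH'hess, hH'cp⟩, hH'uniq⟩ := IH (fun m => P m.castSucc) hP'
    -- the Q basis
    set Q : Fin (n+1) → Polynomial ℂ :=
      fun i => Fin.cases 1 (fun j : Fin n => P j.castSucc) i with hQdef
    have hQ0 : Q 0 = 1 := rfl
    have hQs : ∀ j : Fin n, Q j.succ = P j.castSucc := fun j => by simp [hQdef]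
    have hQ : ∀ i : Fin (n+1), (Q i).Monic ∧ (Q i).natDegree = i.val := by
      intro i
      rcases Fin.eq_zero_or_eq_succ i with rfl | ⟨j, rfl⟩
      · rw [hQ0]; exact ⟨monic_one, by simp⟩
      · rw [hQs j]
        exact ⟨(hP j.castSucc).1, by simpa using (hP j.castSucc).2⟩
    -- generic: charpolys of leading minors are Q
    have hlead : ∀ (K : Matrix (Fin (n+1)) (Fin (n+1)) ℂ),
        (∀ m : Fin n, (lead K (m.val+1) (by omega)).charpoly = P m.castSucc) →
        ∀ i : Fin (n+1), (lead K i.val (by omega)).charpoly = Q i := by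
      intro K hK i
      rcases Fin.eq_zero_or_eq_succ i with rfl | ⟨j, rfl⟩
      · rw [hQ0]; exact charpoly_fin_zero _
      · rw [hQs j]; exact hK j
    -- the target polynomial for the last column
    have hQl := hQ (Fin.last n)
    have hXQ : (X * Q (Fin.last n)).Monic := monic_X.mul hQl.1
    have hXQdeg : (X * Q (Fin.last n)).natDegree = n + 1 := by
      rw [monic_X.natDegree_mul hQl.1, hQl.2, natDegree_X, Fin.val_last]
      omega
    have hPl := hP (Fin.last n)
    have hdeg : (X * Q (Fin.last n) - P (Fin.last n)).degree < ((n+1 : ℕ) : WithBot ℕ) := by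
      have h1 : (X * Q (Fin.last n)).degree = ((n+1 : ℕ) : WithBot ℕ) := by
        rw [Polynomial.degree_eq_natDegree hXQ.ne_zero, hXQdeg]
      have h2 : (P (Fin.last n)).degree = ((n+1 : ℕ) : WithBot ℕ) := by
        rw [Polynomial.degree_eq_natDegree hPl.1.ne_zero, hPl.2, Fin.val_last]
      have h3 := Polynomial.degree_sub_lt (h1.trans h2.symm) hXQ.ne_zero
        (by rw [hXQ.leadingCoeff, hPl.1.leadingCoeff])
      rwa [h1] at h3
    obtain ⟨c, hc, hcu⟩ := exists_unique_coeffs n Q hQ (X * Q (Fin.last n) - P (Fin.last n)) hdeg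
    -- the matrix
    set H : Matrix (Fin (n+1)) (Fin (n+1)) ℂ := Matrix.of fun i j =>
      if hj : j.val < n then
        (if hi : i.val < n then H' ⟨i.1, hi⟩ ⟨j.1, hj⟩ else (if i.val = j.val + 1 then 1 else 0))
      else c i with hHdef
    have hHsmall : ∀ (i j : Fin (n+1)) (hi : i.val < n) (hj : j.val < n),
        H i j = H' ⟨i.1, hi⟩ ⟨j.1, hj⟩ := by
      intro i j hi hj
      show (if hj : j.val < n then _ else _) = _
      rw [dif_pos hj, dif_pos hi]
    have hHrow : ∀ (i j : Fin (n+1)), ¬ i.val < n → j.val < n →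
        H i j = if i.val = j.val + 1 then 1 else 0 := by
      intro i j hi hj
      show (if hj : j.val < n then _ else _) = _
      rw [dif_pos hj, dif_neg hi]
    have hHcol : ∀ i : Fin (n+1), H i (Fin.last n) = c i := by
      intro i
      show (if hj : (Fin.last n).val < n then _ else _) = _
      rw [dif_neg (by simp)]
    have hHlead : lead H n (by omega) = H' := by
      ext i j
      show H (Fin.castLE _ i) (Fin.castLE _ j) = H' i j
      rw [hHsmall _ _ i.isLt j.isLt]
      exact congrArg₂ H' (Fin.ext rfl) (Fin.ext rfl)
    have hHleadk : ∀ (k : ℕ) (h : k ≤ n), lead H k (by omega) = lead H' k h := by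
      intro k h
      rw [← hHlead, lead_lead]
    have hHhess : IsUnitUpperHessenberg H := by
      constructor
      · intro i j hij
        have hj : j.val < n := by omega
        by_cases hi : i.val < n
        · rw [hHsmall i j hi hj]
          exact hH'hess.1 _ _ (by simpa using hij)
        · rw [hHrow i j hi hj, if_neg (by omega)]
      · intro i j hij
        have hj : j.val < n := by omega
        by_cases hi : i.val < n
        · rw [hHsmall i j hi hj]
          exact hH'hess.2 _ _ (by simpa using hij)
        · rw [hHrow i j hi hj, if_pos hij]
    have hHcp' : ∀ m : Fin n, (lead H (m.val+1) (by omega)).charpoly = P m.castSucc := by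
      intro m
      rw [hHleadk (m.val+1) m.isLt]
      exact hH'cp m
    have hHQ := hlead H hHcp'
    have e1 : (lead H n (by omega)).charpoly = Q (Fin.last n) := by
      have := hHQ (Fin.last n); simpa using this
    have e2 : ∀ i : Fin n, (lead H i.val (by omega)).charpoly = Q i.castSucc := by
      intro i; exact hHQ i.castSucc
    have hHlastcp : H.charpoly = P (Fin.last n) := by
      rw [hess_charpoly_rec n H hHhess, e1, hHcol (Fin.last n)]
      rw [Finset.sum_congr rfl (fun i _ => by rw [hHcol i.castSucc, e2 i])]
      rw [Fin.sum_univ_castSucc (f := fun i : Fin (n+1) => C (c i) * Q i)] at hc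
      linear_combination -hc
    refine ⟨H, ⟨hHhess, ?_⟩, ?_⟩
    · intro m
      by_cases hm : m.val < n
      · have hcast : (⟨m.val, hm⟩ : Fin n).castSucc = m := Fin.ext rfl
        have := hHcp' ⟨m.val, hm⟩
        rw [hcast] at this
        exact this
      · have hml : m = Fin.last n := Fin.ext (by simp only [Fin.val_last]; have := m.isLt; omega)
        subst hml
        have hfull : lead H ((Fin.last n).val + 1) (Fin.last n).isLt = H :=
          lead_self H (le_refl _)
        rw [hfull]
        exact hHlastcp
    · -- uniqueness
      rintro K ⟨hKhess, hKcp⟩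
      have hKcp' : ∀ m : Fin n, (lead K (m.val+1) (by omega)).charpoly = P m.castSucc := by
        intro m; exact hKcp m.castSucc
      have hKlead : lead K n (by omega) = H' := by
        apply hH'uniq
        refine ⟨hess_lead hKhess _, ?_⟩
        intro m
        rw [lead_lead]
        exact hKcp' m
      have hKQ := hlead K hKcp'
      have e1K : (lead K n (by omega)).charpoly = Q (Fin.last n) := by
        have := hKQ (Fin.last n); simpa using this
      have e2K : ∀ i : Fin n, (lead K i.val (by omega)).charpoly = Q i.castSucc := by
        intro i; exact hKQ i.castSucc
      have hKfull : lead K ((Fin.last n).val + 1) (Fin.last n).isLt = K :=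
        lead_self K (le_refl _)
      have hKchar : K.charpoly = P (Fin.last n) := by
        have := hKcp (Fin.last n)
        rwa [hKfull] at this
      rw [hess_charpoly_rec n K hKhess, e1K] at hKchar
      rw [Finset.sum_congr rfl (fun i _ => by rw [e2K i])] at hKchar
      have hc2 : ∑ i : Fin (n+1), C (K i (Fin.last n)) * Q i
          = X * Q (Fin.last n) - P (Fin.last n) := by
        rw [Fin.sum_univ_castSucc (f := fun i : Fin (n+1) => C (K i (Fin.last n)) * Q i)]
        linear_combination -hKchar
      have hc2c : (fun i : Fin (n+1) => K i (Fin.last n)) = c := hcu _ hc2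
      ext i j
      by_cases hj : j.val < n
      · by_cases hi : i.val < n
        · have h1 := congrFun (congrFun hKlead ⟨i.1, hi⟩) ⟨j.1, hj⟩
          have h2 : lead K n (by omega) ⟨i.1, hi⟩ ⟨j.1, hj⟩ = K i j := by
            show K (Fin.castLE _ _) (Fin.castLE _ _) = K i j
            congr 1 <;> exact Fin.ext rfl
          rw [h2] at h1
          rw [h1, hHsmall i j hi hj]
        · rw [hHrow i j hi hj]
          by_cases hij : i.val = j.val + 1
          · rw [if_pos hij, hKhess.2 i j hij]
          · rw [if_neg hij, hKhess.1 i j (by omega)]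
      · have hjl : j = Fin.last n := Fin.ext (by simp only [Fin.val_last]; have := j.isLt; omega)
        subst hjl
        rw [hHcol i, ← hc2c]
end

section
/- Let B = [[Λ, c],[bᵀ, δ]] ∈ M(m+1, ℂ) where Λ = diag(μ_1, ..., μ_m) with distinct entries, b, c ∈ ℂ^m, δ ∈ ℂ. Let P_m(λ) = ∏_i (λ - μ_i) and let P_{m+1} be the characteristic polynomial of B. Then for each i, b_i c_i = -P_{m+1}(μ_i) / P_m'(μ_i); equivalently diag(b)·diag(c) = -P_{m+1}(Λ)·(P_m'(Λ))^{-1}. -/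
/-!
At `λ = μ i` the matrix `λ - B` is an arrow matrix (diagonal away from its last row and column)
whose `i`-th diagonal entry vanishes. Its `i`-th row and column are then supported at the apex,
so the transposition of `i` with the apex is the only permutation contributing to the determinant:
`P_{m+1}(μ i) = -b i * c i * ∏_{j ≠ i} (μ i - μ j)`, and the product is `P_m'(μ i)`.
-/

open Matrix Polynomial Finset

theorem Equiv.Perm.eq_swap_of_apply_eq_of_forall_apply_eq_self {n : Type*} [DecidableEq n]
    {σ : Equiv.Perm n} {p q : n} (hpq : p ≠ q) (hp : σ p = q)
    (hfix : ∀ k, k ≠ p → k ≠ q → σ k = k) : σ = Equiv.swap p q := by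
  have hq : σ q = p := by
    by_contra h
    have hq' : σ q ≠ q := fun h' => hpq (σ.injective (hp.trans h'.symm))
    exact hq' (σ.injective (hfix _ h hq'))
  ext k
  by_cases hkp : k = p
  · simp [hkp, hp]
  by_cases hkq : k = q
  · simp [hkq, hq]
  · rw [hfix k hkp hkq, Equiv.swap_apply_of_ne_of_ne hkp hkq]

theorem Matrix.det_eq_of_arrow_of_diag_eq_zero {n R : Type*} [Fintype n] [DecidableEq n]
    [CommRing R] (M : Matrix n n R) {p q : n} (hpq : p ≠ q)
    (harrow : ∀ j k, j ≠ k → j ≠ q → k ≠ q → M j k = 0) (hp : M p p = 0) :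
    M.det = -(M p q * M q p) * ∏ k ∈ {p, q}ᶜ, M k k := by
  have hsurvivor : ∀ σ : Equiv.Perm n, (∀ j, M (σ j) j ≠ 0) → σ = Equiv.swap p q := by
    intro σ hσ
    have hσp : σ p = q := by
      by_contra h
      exact hσ p (if h' : σ p = p then by rwa [h'] else harrow _ _ h' h hpq)
    refine Equiv.Perm.eq_swap_of_apply_eq_of_forall_apply_eq_self hpq hσp fun k hkp hkq => ?_
    by_contra h
    exact hσ k (harrow _ _ h (fun h' => hkp (σ.injective (h'.trans hσp.symm))) hkq)
  rw [det_apply, sum_eq_single (Equiv.swap p q) (fun σ _ hσ => ?_) (by simp),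
    Equiv.Perm.sign_swap hpq, ← prod_mul_prod_compl {p, q}, prod_pair hpq]
  · rw [prod_congr rfl fun k hk => ?_]
    · rw [Equiv.swap_apply_left, Equiv.swap_apply_right, Units.neg_smul, one_smul]
      ring
    · simp only [compl_insert, mem_erase, mem_compl, mem_singleton] at hk
      rw [Equiv.swap_apply_of_ne_of_ne hk.1 hk.2]
  · obtain ⟨j, hj⟩ : ∃ j, M (σ j) j = 0 := by
      by_contra! h
      exact hσ (hsurvivor σ h)
    rw [prod_eq_zero (f := fun i => M (σ i) i) (mem_univ j) hj, smul_zero]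

theorem Fin.compl_pair_castSucc_last {m : ℕ} (i : Fin m) :
    ({i.castSucc, Fin.last m}ᶜ : Finset (Fin (m + 1))) = (univ.erase i).map Fin.castSuccEmb := by
  ext k
  induction k using Fin.lastCases <;> simp [Fin.castSucc_ne_last, eq_comm]

theorem Polynomial.eval_derivative_prod_X_sub_C {R ι : Type*} [CommRing R] [Fintype ι]
    [DecidableEq ι] (v : ι → R) (i : ι) :
    (derivative (∏ j, (X - C (v j)))).eval (v i) = ∏ j ∈ univ.erase i, (v i - v j) :=
  (Lagrange.eval_nodal_derivative_eval_node_eq (mem_univ i)).trans Lagrange.eval_nodal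

theorem arrow_entry_product_formula_general {m : ℕ}
    (B : Matrix (Fin (m + 1)) (Fin (m + 1)) ℂ)
    (μ : Fin m → ℂ) (hμ : Function.Injective μ)
    (b c : Fin m → ℂ)
    (htop : ∀ i j : Fin m, B i.castSucc j.castSucc = if i = j then μ i else 0)
    (hcol : ∀ i : Fin m, B i.castSucc (Fin.last m) = c i)
    (hrow : ∀ i : Fin m, B (Fin.last m) i.castSucc = b i) :
    ∀ i : Fin m,
      b i * c i =
        -(B.charpoly.eval (μ i)) /
          ((derivative (∏ j : Fin m, (X - C (μ j)))).eval (μ i)) := by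
  intro i
  have harrow : ∀ j k, j ≠ k → j ≠ Fin.last m → k ≠ Fin.last m →
      (scalar (Fin (m + 1)) (μ i) - B) j k = 0 := by
    intro j k hjk hj hk
    obtain ⟨j, rfl⟩ := Fin.exists_castSucc_eq.mpr hj
    obtain ⟨k, rfl⟩ := Fin.exists_castSucc_eq.mpr hk
    simp_all
  have hcharpoly : B.charpoly.eval (μ i) = -(c i * b i) * ∏ j ∈ univ.erase i, (μ i - μ j) := by
    rw [eval_charpoly, det_eq_of_arrow_of_diag_eq_zero _ (Fin.castSucc_ne_last i) harrow
      (by simp [htop]), Fin.compl_pair_castSucc_last, prod_map]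
    simp [hcol, hrow, htop, (Fin.castSucc_ne_last i).symm]
  have hnodes : ∏ j ∈ univ.erase i, (μ i - μ j) ≠ 0 :=
    prod_ne_zero_iff.mpr fun j hj => sub_ne_zero.mpr (hμ.ne (ne_of_mem_erase hj).symm)
  rw [hcharpoly, eval_derivative_prod_X_sub_C]
  field_simp

/-- For an arrow matrix `B = [[Λ, c],[bᵀ, δ]]` with `Λ = diag(μ)` having distinct
entries, one has `b i * c i = -P_{m+1}(μ i) / P_m'(μ i)`, where `P_m(λ) = ∏ (λ - μ j)`
and `P_{m+1}` is the characteristic polynomial of `B`. -/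
theorem arrow_entry_product_formula {m : ℕ}
    (B : Matrix (Fin (m + 1)) (Fin (m + 1)) ℂ)
    (μ : Fin m → ℂ) (hμ : Function.Injective μ)
    (b c : Fin m → ℂ) (δ : ℂ)
    (htop : ∀ i j : Fin m, B i.castSucc j.castSucc = if i = j then μ i else 0)
    (hcol : ∀ i : Fin m, B i.castSucc (Fin.last m) = c i)
    (hrow : ∀ i : Fin m, B (Fin.last m) i.castSucc = b i)
    (hcorner : B (Fin.last m) (Fin.last m) = δ) :
    ∀ i : Fin m,
      b i * c i =
        -(B.charpoly.eval (μ i)) /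
          ((derivative (∏ j : Fin m, (X - C (μ j)))).eval (μ i)) :=
  arrow_entry_product_formula_general B μ hμ b c htop hcol hrow
end

section
/- Let B ∈ M(m, ℂ). A vector v ∈ ℂ^m is a cyclic vector for B if and only if for every matrix B' commuting with B, B'v = 0 implies B' = 0. -/
/-!
If `v` is cyclic, anything commuting with `B` also commutes with every `p(B)`, so it kills every
`p(B) v` as soon as it kills `v`. Conversely, if the cyclic subspace `W` of `v` is proper, then
`Bᵀ` preserves the nonzero annihilator of `W` and so has an eigenvector `φ` there, with eigenvalue
`μ` say; `μ` is also an eigenvalue of `B`, with eigenvector `u`, and the rank-one map `x ↦ φ(x) u`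
is nonzero, commutes with `B`, and kills `v ∈ W`.
-/

open Matrix Polynomial

namespace Module.End

section CommSemiring

variable {R M : Type*} [CommSemiring R] [AddCommMonoid M] [Module R M]

theorem eq_zero_of_commute_of_apply_eq_zero {f g : End R M} {v : M}
    (hv : Function.Surjective fun p : R[X] => aeval f p v) (hgf : Commute g f) (hgv : g v = 0) :
    g = 0 := by
  ext w
  obtain ⟨p, rfl⟩ := hv w
  have hgp : Commute g (aeval f p) :=
    Algebra.commute_of_mem_adjoin_singleton_of_commute (aeval_mem_adjoin_singleton R f) hgf
  change (g * aeval f p) v = 0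
  rw [hgp.eq, mul_apply, hgv, map_zero]

theorem commute_smulRight {f : End R M} {φ : Dual R M} {u : M} {μ : R}
    (hu : f u = μ • u) (hφ : φ ∘ₗ f = μ • φ) : Commute (φ.smulRight u) f := by
  ext x
  change φ (f x) • u = f (φ x • u)
  rw [← LinearMap.comp_apply, hφ, map_smul, hu, LinearMap.smul_apply, smul_comm, smul_eq_mul,
    mul_smul]

end CommSemiring

variable {K V : Type*} [Field K] [AddCommGroup V] [Module K V] [FiniteDimensional K V]

theorem hasEigenvalue_of_dual_comp_eq_smul {f : End K V} {φ : Dual K V} {μ : K} (hφ : φ ≠ 0)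
    (hφf : φ ∘ₗ f = μ • φ) : f.HasEigenvalue μ := by
  rw [hasEigenvalue_iff_mem_spectrum, spectrum.mem_iff]
  intro hunit
  have hφ_kill : φ ∘ₗ (algebraMap K (End K V) μ - f) = 0 := by
    rw [LinearMap.comp_sub, hφf, Algebra.algebraMap_eq_smul_one, LinearMap.comp_smul]
    exact sub_self _
  refine hφ (LinearMap.ext fun x => ?_)
  obtain ⟨y, rfl⟩ := ((End.isUnit_iff _).1 hunit).surjective x
  exact LinearMap.congr_fun hφ_kill y

theorem exists_dual_eigenvector_mem_dualAnnihilator [IsAlgClosed K] (f : End K V)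
    {W : Submodule K V} (hWf : ∀ x ∈ W, f x ∈ W) (hW : W ≠ ⊤) :
    ∃ φ : Dual K V, φ ≠ 0 ∧ φ ∈ W.dualAnnihilator ∧ ∃ μ : K, φ ∘ₗ f = μ • φ := by
  have hA : ∀ φ ∈ W.dualAnnihilator, φ ∘ₗ f ∈ W.dualAnnihilator := by
    simp only [Submodule.mem_dualAnnihilator]
    exact fun φ hφ x hx => hφ _ (hWf x hx)
  have : Nontrivial W.dualAnnihilator :=
    Submodule.nontrivial_iff_ne_bot.2 (by simpa using hW)
  obtain ⟨μ, hμ⟩ := exists_eigenvalue (K := K) (V := W.dualAnnihilator) (f.dualMap.restrict hA)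
  obtain ⟨⟨φ, hφA⟩, hφ⟩ := hμ.exists_hasEigenvector
  exact ⟨φ, fun h => hφ.2 (Subtype.ext h), hφA, μ, congrArg Subtype.val hφ.apply_eq_smul⟩

theorem exists_commute_apply_eq_zero_of_not_surjective [IsAlgClosed K] {f : End K V} {v : V}
    (hv : ¬Function.Surjective fun p : K[X] => aeval f p v) :
    ∃ g : End K V, Commute g f ∧ g v = 0 ∧ g ≠ 0 := by
  set W := LinearMap.range (LinearMap.applyₗ v ∘ₗ (aeval f).toLinearMap)
  have hWf : ∀ x ∈ W, f x ∈ W := by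
    rintro _ ⟨p, rfl⟩
    exact ⟨X * p, by simp⟩
  have hW : W ≠ ⊤ := fun h => hv (LinearMap.range_eq_top.1 h)
  obtain ⟨φ, hφ, hφW, μ, hφf⟩ := exists_dual_eigenvector_mem_dualAnnihilator f hWf hW
  obtain ⟨u, hu⟩ := (hasEigenvalue_of_dual_comp_eq_smul hφ hφf).exists_hasEigenvector
  refine ⟨φ.smulRight u, commute_smulRight hu.apply_eq_smul hφf, ?_, by simpa using ⟨hφ, hu.2⟩⟩
  rw [LinearMap.smulRight_apply, (Submodule.mem_dualAnnihilator φ).1 hφW v ⟨1, by simp⟩,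
    zero_smul]

theorem surjective_aeval_apply_iff [IsAlgClosed K] {f : End K V} {v : V} :
    Function.Surjective (fun p : K[X] => aeval f p v) ↔
      ∀ g : End K V, Commute g f → g v = 0 → g = 0 := by
  refine ⟨fun hv g => eq_zero_of_commute_of_apply_eq_zero hv, fun h => ?_⟩
  by_contra hv
  obtain ⟨g, hgf, hgv, hg⟩ := exists_commute_apply_eq_zero_of_not_surjective hv
  exact hg (h g hgf hgv)

end Module.End

/-- `v` is cyclic for `B` iff every member `B'` of the commutant of `B` with
`B' v = 0` is zero. -/
theorem cyclic_iff_commutant_faithful {m : ℕ}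
    (B : Matrix (Fin m) (Fin m) ℂ) (v : Fin m → ℂ) :
    (∀ w : Fin m → ℂ, ∃ f : Polynomial ℂ, (aeval B f) *ᵥ v = w) ↔
      (∀ B' : Matrix (Fin m) (Fin m) ℂ, B' * B = B * B' → B' *ᵥ v = 0 → B' = 0) := by
  have haeval : ∀ p : ℂ[X], aeval B p *ᵥ v = aeval (toLinAlgEquiv' B) p v := fun p => by
    rw [aeval_algEquiv]; rfl
  simp_rw [haeval]
  refine Module.End.surjective_aeval_apply_iff.trans
    (toLinAlgEquiv'.forall_congr fun {B'} => ?_).symm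
  simp only [AlgEquiv.toEquiv_eq_coe, EquivLike.coe_coe, Commute, SemiconjBy, ← map_mul,
    toLinAlgEquiv'.injective.eq_iff, map_eq_zero_iff _ toLinAlgEquiv'.injective]
  rfl
end

section
/- Let B_m ∈ M(m, ℂ) and fix target eigenvalues λ_1, ..., λ_{m+1} with δ := Σλ_i - tr(B_m). Suppose b ∈ ℂ^m is such that the pair (B_m, bᵀ) is observable (b, B_mᵀb, ..., (B_mᵀ)^{m-1}b linearly independent). Then there is at most one c ∈ ℂ^m such that the matrix [[B_m, c],[bᵀ, δ]] has characteristic polynomial ∏_{i=1}^{m+1}(λ - λ_i). Specifically, c is determined by the linear system bᵀB_m^{k-1}c = g_k (k = 1,...,m), where the g_k are the coefficients in the expansion λ - δ - P_{m+1}(λ)/P_m(λ) = Σ_{k≥1} g_k λ^{-k}. -/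
open Matrix Polynomial

/-!
By the Schur complement, computed over the fraction field of `ℂ[X]`, the characteristic polynomial
of the bordered matrix is `(X - δ) χ_B - bᵀ adj(X - B) c`, which is affine in `c`. Two admissible
columns therefore satisfy `bᵀ adj(X - B) (c₁ - c₂) = 0`, i.e. `bᵀ N (c₁ - c₂) = 0` for every
coefficient `N` of `adj(X - B) ∈ M_m(ℂ)[X]`. Since `(X - B) adj(X - B) = χ_B`, the span of these
coefficients contains the leading coefficient `1` and is stable under left multiplication by `B`,
so it contains every `B^k`. Thus `bᵀ B^k (c₁ - c₂) = 0` for all `k`, and observability forces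
`c₁ = c₂`.
-/

namespace Matrix

variable {n : Type*} [Fintype n] [DecidableEq n]

theorem det_fromBlocks_replicateCol_replicateRow_of_det_ne_zero {K : Type*} [Field K]
    {A : Matrix n n K} (hA : A.det ≠ 0) (u v : n → K) (s : K) :
    (fromBlocks A (replicateCol Unit u) (replicateRow Unit v) (of fun _ _ => s)).det =
      s * A.det - v ⬝ᵥ (A.adjugate *ᵥ u) := by
  let := A.invertibleOfIsUnitDet (isUnit_iff_ne_zero.mpr hA)
  rw [det_fromBlocks₁₁, det_unique (n := Unit), invOf_eq_nonsing_inv, inv_def,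
    Ring.inverse_eq_inv', Matrix.mul_smul, Matrix.smul_mul, Matrix.mul_assoc,
    ← replicateCol_mulVec]
  simp only [sub_apply, of_apply, smul_apply, replicateRow_mul_replicateCol_apply, smul_eq_mul]
  rw [mul_sub, mul_inv_cancel_left₀ hA, mul_comm]

theorem det_fromBlocks_replicateCol_replicateRow {R : Type*} [CommRing R] [IsDomain R]
    {A : Matrix n n R} (hA : A.det ≠ 0) (u v : n → R) (s : R) :
    (fromBlocks A (replicateCol Unit u) (replicateRow Unit v) (of fun _ _ => s)).det =
      s * A.det - v ⬝ᵥ (A.adjugate *ᵥ u) := by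
  let f := algebraMap R (FractionRing R)
  have hf : Function.Injective f := IsFractionRing.injective R (FractionRing R)
  apply hf
  have hA' : (f.mapMatrix A).det ≠ 0 := by
    rwa [← RingHom.map_det, map_ne_zero_iff f hf]
  have := det_fromBlocks_replicateCol_replicateRow_of_det_ne_zero hA' (f ∘ u) (f ∘ v) (f s)
  rw [RingHom.map_det, RingHom.mapMatrix_apply, fromBlocks_map, map_sub, map_mul,
    RingHom.map_det, RingHom.map_dotProduct]
  have hmv : f ∘ (A.adjugate *ᵥ u) = (f.mapMatrix A).adjugate *ᵥ (f ∘ u) := by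
    ext i
    rw [Function.comp_apply, RingHom.map_mulVec, ← RingHom.mapMatrix_apply, RingHom.map_adjugate]
  rwa [hmv]

theorem charpoly_fromBlocks_replicateCol_replicateRow {R : Type*} [CommRing R] [IsDomain R]
    (B : Matrix n n R) (c b : n → R) (δ : R) :
    (fromBlocks B (replicateCol Unit c) (replicateRow Unit b) (of fun _ _ => δ)).charpoly =
      (X - C δ) * B.charpoly - (C ∘ b) ⬝ᵥ ((charmatrix B).adjugate *ᵥ (C ∘ c)) := by
  have hcorner : charmatrix (of fun (_ : Unit) (_ : Unit) => δ) = of fun _ _ => X - C δ := by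
    ext; simp
  rw [charpoly, charmatrix_fromBlocks, hcorner]
  erw [det_fromBlocks_replicateCol_replicateRow (charpoly_monic B).ne_zero (-(C ∘ c)) (-(C ∘ b))]
  rw [mulVec_neg, neg_dotProduct, dotProduct_neg, neg_neg, charpoly]

theorem pow_mem_span_coeff_adjugate_charmatrix {R : Type*} [CommRing R] (B : Matrix n n R)
    (j : ℕ) : B ^ j ∈ Submodule.span R (Set.range (matPolyEquiv (charmatrix B).adjugate).coeff) := by
  set P := matPolyEquiv (charmatrix B).adjugate
  set S := Submodule.span R (Set.range P.coeff)
  have hP : (X - Polynomial.C B) * P = B.charpoly.map (algebraMap R (Matrix n n R)) := by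
    rw [← matPolyEquiv_charmatrix, ← map_mul, mul_adjugate, matPolyEquiv_smul_one, charpoly]
  have hone : (1 : Matrix n n R) ∈ S := by
    have h := leadingCoeff_monic_mul (q := P) (monic_X_sub_C B)
    rw [hP, ((charpoly_monic B).map _).leadingCoeff] at h
    rw [h]
    exact Submodule.subset_span ⟨_, rfl⟩
  have hmul : ∀ N ∈ S, B * N ∈ S := by
    intro N hN
    induction hN using Submodule.span_induction with
    | mem N hN =>
      obtain ⟨k, rfl⟩ := hN
      have h := congrArg (coeff · k) hP
      simp only [sub_mul, coeff_sub, coeff_C_mul, coeff_map, Algebra.algebraMap_eq_smul_one] at h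
      have hX : (X * P).coeff k ∈ S := by
        cases k with
        | zero => rw [coeff_X_mul_zero]; exact S.zero_mem
        | succ k => rw [coeff_X_mul]; exact Submodule.subset_span ⟨k, rfl⟩
      rw [← sub_sub_cancel ((X * P).coeff k) (B * P.coeff k), h]
      exact S.sub_mem hX (S.smul_mem _ hone)
    | zero => simp
    | add N N' _ _ hN hN' => rw [mul_add]; exact S.add_mem hN hN'
    | smul a N _ hN => rw [mul_smul_comm]; exact S.smul_mem a hN
  induction j with
  | zero => rwa [pow_zero]
  | succ j ih => rw [pow_succ']; exact hmul _ ih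

theorem coeff_comp_C_dotProduct_mulVec_comp_C {R : Type*} [CommRing R] (M : Matrix n n R[X])
    (v w : n → R) (k : ℕ) :
    ((C ∘ v) ⬝ᵥ (M *ᵥ (C ∘ w))).coeff k = v ⬝ᵥ ((matPolyEquiv M).coeff k *ᵥ w) := by
  simp only [dotProduct, mulVec, Function.comp_apply, finsetSum_coeff, coeff_C_mul, coeff_mul_C,
    matPolyEquiv_coeff_apply, Finset.mul_sum]

theorem dotProduct_pow_mulVec_eq_zero_of_adjugate_charmatrix {R : Type*} [CommRing R]
    {B : Matrix n n R} {v w : n → R}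
    (h : (C ∘ v) ⬝ᵥ ((charmatrix B).adjugate *ᵥ (C ∘ w)) = 0) (j : ℕ) :
    v ⬝ᵥ (B ^ j *ᵥ w) = 0 := by
  suffices hspan : ∀ N ∈ Submodule.span R (Set.range (matPolyEquiv (charmatrix B).adjugate).coeff),
      v ⬝ᵥ (N *ᵥ w) = 0 from hspan _ (pow_mem_span_coeff_adjugate_charmatrix B j)
  intro N hN
  induction hN using Submodule.span_induction with
  | mem N hN =>
    obtain ⟨k, rfl⟩ := hN
    rw [← coeff_comp_C_dotProduct_mulVec_comp_C, h, coeff_zero]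
  | zero => simp
  | add N N' _ _ hN hN' => rw [add_mulVec, dotProduct_add, hN, hN', add_zero]
  | smul a N _ hN => rw [smul_mulVec, dotProduct_smul, hN, smul_zero]

theorem dotProduct_pow_mulVec_eq_of_charpoly_fromBlocks_eq {R : Type*} [CommRing R] [IsDomain R]
    {B : Matrix n n R} {b c₁ c₂ : n → R} {δ : R}
    (h : (fromBlocks B (replicateCol Unit c₁) (replicateRow Unit b) (of fun _ _ => δ)).charpoly =
      (fromBlocks B (replicateCol Unit c₂) (replicateRow Unit b) (of fun _ _ => δ)).charpoly)
    (j : ℕ) : b ⬝ᵥ (B ^ j *ᵥ c₁) = b ⬝ᵥ (B ^ j *ᵥ c₂) := by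
  rw [charpoly_fromBlocks_replicateCol_replicateRow,
    charpoly_fromBlocks_replicateCol_replicateRow, sub_right_inj] at h
  rw [← sub_eq_zero, ← dotProduct_sub, ← mulVec_sub]
  refine dotProduct_pow_mulVec_eq_zero_of_adjugate_charmatrix ?_ j
  rw [show C ∘ (c₁ - c₂) = C ∘ c₁ - C ∘ c₂ from funext fun _ => C_sub, mulVec_sub,
    dotProduct_sub, h, sub_self]

theorem eq_of_forall_dotProduct_pow_mulVec_eq {K : Type*} [Field K] {m : ℕ}
    {B : Matrix (Fin m) (Fin m) K} {b : Fin m → K}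
    (hobs : LinearIndependent K (fun k : Fin m => (Bᵀ ^ (k : ℕ)) *ᵥ b)) {c₁ c₂ : Fin m → K}
    (h : ∀ k : Fin m, b ⬝ᵥ (B ^ (k : ℕ) *ᵥ c₁) = b ⬝ᵥ (B ^ (k : ℕ) *ᵥ c₂)) : c₁ = c₂ := by
  have hunit : IsUnit (of fun k : Fin m => (Bᵀ ^ (k : ℕ)) *ᵥ b) :=
    linearIndependent_rows_iff_isUnit.mp hobs
  refine mulVec_injective_iff_isUnit.mpr hunit (funext fun k => ?_)
  have hrow (c : Fin m → K) :
      ((of fun k : Fin m => (Bᵀ ^ (k : ℕ)) *ᵥ b) *ᵥ c) k = b ⬝ᵥ (B ^ (k : ℕ) *ᵥ c) := by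
    rw [dotProduct_mulVec, ← mulVec_transpose, transpose_pow]
    rfl
  rw [hrow, hrow, h]

end Matrix

theorem observable_unique_completion_general {m : ℕ}
    (Bm : Matrix (Fin m) (Fin m) ℂ) (b : Fin m → ℂ)
    (lam : Fin (m + 1) → ℂ) (δ : ℂ)
    (hobs : LinearIndependent ℂ (fun k : Fin m => (Bmᵀ ^ (k : ℕ)) *ᵥ b)) :
    ∀ c₁ c₂ : Fin m → ℂ,
      (Matrix.fromBlocks Bm (Matrix.of fun i (_ : Unit) => c₁ i)
          (Matrix.of fun (_ : Unit) j => b j)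
          (Matrix.of fun (_ : Unit) (_ : Unit) => δ)).charpoly =
        ∏ i : Fin (m + 1), (X - C (lam i)) →
      (Matrix.fromBlocks Bm (Matrix.of fun i (_ : Unit) => c₂ i)
          (Matrix.of fun (_ : Unit) j => b j)
          (Matrix.of fun (_ : Unit) (_ : Unit) => δ)).charpoly =
        ∏ i : Fin (m + 1), (X - C (lam i)) →
      c₁ = c₂ := fun _ _ h₁ h₂ =>
  eq_of_forall_dotProduct_pow_mulVec_eq hobs fun k =>
    dotProduct_pow_mulVec_eq_of_charpoly_fromBlocks_eq (h₁.trans h₂.symm) k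

/-- If `(B_m, bᵀ)` is observable, then there is at most one completing column `c`
giving the bordered matrix prescribed eigenvalues `λ_1, ..., λ_{m+1}`. -/
theorem observable_unique_completion {m : ℕ}
    (Bm : Matrix (Fin m) (Fin m) ℂ) (b : Fin m → ℂ)
    (lam : Fin (m + 1) → ℂ) (δ : ℂ)
    (hδ : δ = (∑ i, lam i) - Bm.trace)
    (hobs : LinearIndependent ℂ (fun k : Fin m => (Bmᵀ ^ (k : ℕ)) *ᵥ b)) :
    ∀ c₁ c₂ : Fin m → ℂ,
      (Matrix.fromBlocks Bm (Matrix.of fun i (_ : Unit) => c₁ i)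
          (Matrix.of fun (_ : Unit) j => b j)
          (Matrix.of fun (_ : Unit) (_ : Unit) => δ)).charpoly =
        ∏ i : Fin (m + 1), (X - C (lam i)) →
      (Matrix.fromBlocks Bm (Matrix.of fun i (_ : Unit) => c₂ i)
          (Matrix.of fun (_ : Unit) j => b j)
          (Matrix.of fun (_ : Unit) (_ : Unit) => δ)).charpoly =
        ∏ i : Fin (m + 1), (X - C (lam i)) →
      c₁ = c₂ :=
  observable_unique_completion_general Bm b lam δ hobs
end

section
/- For any n, the functions f_{m,k}(x) = tr((x_m)^k) on M(n, ℂ) pairwise Poisson-commute: {tr((x_{m_1})^{k_1}), tr((x_{m_2})^{k_2})} = 0 for all 1 ≤ m_1, m_2 ≤ n and all k_1, k_2 ≥ 1, where the Poisson bracket on polynomial functions of the matrix entries is induced by {α_{ij}, α_{kl}} = δ_{jk}α_{il} - δ_{il}α_{kj} (α_{ij}(x) = x_{ij}) extended by bilinearity and the Leibniz rule. -/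
open Matrix MvPolynomial Finset

/-- The generic matrix of coordinate functions on `M(n, ℂ)`. -/
noncomputable def Xmat (n : ℕ) : Matrix (Fin n) (Fin n) (MvPolynomial (Fin n × Fin n) ℂ) :=
  Matrix.of fun i j => MvPolynomial.X (i, j)

/-- Leading principal `m × m` submatrix of a polynomial matrix. -/
def leadP {n : ℕ} (x : Matrix (Fin n) (Fin n) (MvPolynomial (Fin n × Fin n) ℂ))
    (m : ℕ) (h : m ≤ n) : Matrix (Fin m) (Fin m) (MvPolynomial (Fin n × Fin n) ℂ) :=
  x.submatrix (Fin.castLE h) (Fin.castLE h)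

/-- The Lie–Poisson bracket on polynomial functions of the matrix entries, induced
by `{α_{ij}, α_{kl}} = δ_{jk} α_{il} - δ_{il} α_{kj}` via the Leibniz rule. -/
noncomputable def poissonBracket {n : ℕ} (f g : MvPolynomial (Fin n × Fin n) ℂ) :
    MvPolynomial (Fin n × Fin n) ℂ :=
  ∑ p : Fin n × Fin n, ∑ q : Fin n × Fin n,
    ((if p.2 = q.1 then MvPolynomial.X (p.1, q.2) else 0) -
      (if p.1 = q.2 then MvPolynomial.X (q.1, p.2) else 0)) *
      MvPolynomial.pderiv p f * MvPolynomial.pderiv q g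



variable {n m : ℕ}



abbrev R (n : ℕ) := MvPolynomial (Fin n × Fin n) ℂ

lemma pd_trace (p : Fin n × Fin n) (M : Matrix (Fin m) (Fin m) (R n)) :
    pderiv p M.trace = (M.map (pderiv p)).trace := by
  simp [Matrix.trace, Matrix.diag, map_sum, Matrix.map_apply]

lemma pd_mul (p : Fin n × Fin n) (M N : Matrix (Fin m) (Fin m) (R n)) :
    (M * N).map (pderiv p) = M.map (pderiv p) * N + M * N.map (pderiv p) := by
  ext i j
  simp only [Matrix.map_apply, Matrix.mul_apply, Matrix.add_apply, map_sum, pderiv_mul,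
    ← Finset.sum_add_distrib]

lemma pd_pow (p : Fin n × Fin n) (M : Matrix (Fin m) (Fin m) (R n)) (k : ℕ) :
    (M ^ (k + 1)).map (pderiv p)
      = ∑ j ∈ Finset.range (k + 1), M ^ j * M.map (pderiv p) * M ^ (k - j) := by
  induction k with
  | zero => simp
  | succ k ih =>
    rw [pow_succ, pd_mul, ih, Finset.sum_mul, Finset.sum_range_succ (n := k + 1)]
    refine congrArg₂ (· + ·) ?_ ?_
    · refine Finset.sum_congr rfl fun j hj => ?_
      rw [Finset.mem_range] at hj
      rw [mul_assoc, ← pow_succ]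
      congr 2
      omega
    · simp

lemma pd_trace_pow (p : Fin n × Fin n) (M : Matrix (Fin m) (Fin m) (R n)) (k : ℕ) :
    pderiv p (M ^ (k + 1)).trace = (k + 1 : ℕ) • (M ^ k * M.map (pderiv p)).trace := by
  rw [pd_trace, pd_pow, Matrix.trace_sum]
  rw [Finset.sum_congr rfl (fun j hj => ?_), Finset.sum_const, Finset.card_range]
  rw [Finset.mem_range] at hj
  rw [Matrix.trace_mul_comm, ← mul_assoc, ← pow_add, Nat.sub_add_cancel (by omega : j ≤ k)]

lemma pd_trace_leadP (h : m ≤ n) (k : ℕ) (p : Fin n × Fin n) :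
    pderiv p ((leadP (Xmat n) m h ^ (k + 1)).trace)
      = (k + 1 : ℕ) • ∑ z : Fin m × Fin m,
          (if (Fin.castLE h z.2, Fin.castLE h z.1) = p
            then (leadP (Xmat n) m h ^ k) z.1 z.2 else 0) := by
  rw [pd_trace_pow]
  congr 1
  simp [Matrix.trace, Matrix.diag, Matrix.mul_apply, Fintype.sum_prod_type,
    Matrix.map_apply, leadP, Xmat, pderiv_X, Pi.single_apply, mul_ite, mul_one, mul_zero]


lemma coll {β γ : Type*} [Fintype β] [Fintype γ] [DecidableEq γ]
    (e : β → γ) (w : β → R n) (c : γ → R n) :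
    ∑ q : γ, c q * (∑ s : β, if e s = q then w s else 0) = ∑ s : β, c (e s) * w s := by
  simp only [Finset.mul_sum, mul_ite, mul_zero]
  rw [Finset.sum_comm]
  simp [Finset.sum_ite_eq]

lemma key {β₁ β₂ : Type*} [Fintype β₁] [Fintype β₂]
    (c : (Fin n × Fin n) → (Fin n × Fin n) → R n)
    (e₁ : β₁ → Fin n × Fin n) (e₂ : β₂ → Fin n × Fin n)
    (u : β₁ → R n) (v : β₂ → R n) :
    ∑ p : Fin n × Fin n, ∑ q : Fin n × Fin n,
      c p q * (∑ z, if e₁ z = p then u z else 0) * (∑ w, if e₂ w = q then v w else 0)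
    = ∑ z, ∑ w, c (e₁ z) (e₂ w) * u z * v w := by
  calc ∑ p : Fin n × Fin n, ∑ q : Fin n × Fin n,
        c p q * (∑ z, if e₁ z = p then u z else 0) * (∑ w, if e₂ w = q then v w else 0)
      = ∑ p : Fin n × Fin n, ∑ w,
          (c p (e₂ w) * (∑ z, if e₁ z = p then u z else 0)) * v w := by
        refine Finset.sum_congr rfl fun p _ => ?_
        exact coll e₂ v (fun q => c p q * (∑ z, if e₁ z = p then u z else 0))
    _ = ∑ w, ∑ p : Fin n × Fin n,
          (c p (e₂ w) * v w) * (∑ z, if e₁ z = p then u z else 0) := by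
        rw [Finset.sum_comm]
        exact Finset.sum_congr rfl fun w _ => Finset.sum_congr rfl fun p _ => by ring
    _ = ∑ w, ∑ z, (c (e₁ z) (e₂ w) * v w) * u z := by
        refine Finset.sum_congr rfl fun w _ => ?_
        exact coll e₁ u (fun p => c p (e₂ w) * v w)
    _ = ∑ z, ∑ w, c (e₁ z) (e₂ w) * u z * v w := by
        rw [Finset.sum_comm]
        exact Finset.sum_congr rfl fun z _ => Finset.sum_congr rfl fun w _ => by ring

lemma crux {n m₁ m₂ : ℕ} (h₁ : m₁ ≤ n) (h₂ : m₂ ≤ n) (h12 : m₁ ≤ m₂)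
    (u : Fin m₁ × Fin m₁ → R n) (b : ℕ) :
    ∑ z : Fin m₁ × Fin m₁, ∑ w : Fin m₂ × Fin m₂,
      ((if Fin.castLE h₁ z.1 = Fin.castLE h₂ w.2
          then X (Fin.castLE h₁ z.2, Fin.castLE h₂ w.1) else 0)
        - (if Fin.castLE h₁ z.2 = Fin.castLE h₂ w.1
          then X (Fin.castLE h₂ w.2, Fin.castLE h₁ z.1) else 0))
      * u z * ((leadP (Xmat n) m₂ h₂ ^ b) w.1 w.2) = 0 := by
  refine Finset.sum_eq_zero fun z _ => ?_
  have hc : ∀ (x : Fin m₁) (t : Fin m₂),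
      (Fin.castLE h₁ x = Fin.castLE h₂ t) ↔ (Fin.castLE h12 x = t) := by
    intro x t
    constructor
    · intro hh; exact Fin.ext (by simpa using congrArg Fin.val hh)
    · intro hh; exact Fin.ext (by simpa using congrArg Fin.val hh)
  simp only [sub_mul, Finset.sum_sub_distrib, ite_mul, zero_mul]
  rw [sub_eq_zero]
  have e1 : ∑ w : Fin m₂ × Fin m₂,
      (if Fin.castLE h₁ z.1 = Fin.castLE h₂ w.2
        then X (Fin.castLE h₁ z.2, Fin.castLE h₂ w.1) * u z
          * ((leadP (Xmat n) m₂ h₂ ^ b) w.1 w.2) else 0)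
      = ((leadP (Xmat n) m₂ h₂ ^ (b + 1)) (Fin.castLE h12 z.2) (Fin.castLE h12 z.1)) * u z := by
    rw [Fintype.sum_prod_type_right]
    simp only [hc]
    rw [Finset.sum_comm]
    simp only [Finset.sum_ite_eq, Finset.mem_univ, if_true]
    rw [pow_succ', Matrix.mul_apply, Finset.sum_mul]
    refine Finset.sum_congr rfl fun s _ => ?_
    have hx : X (σ := Fin n × Fin n) (R := ℂ) (Fin.castLE h₁ z.2, Fin.castLE h₂ s)
        = leadP (Xmat n) m₂ h₂ (Fin.castLE h12 z.2) s := rfl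
    rw [hx]; ring
  have e2 : ∑ w : Fin m₂ × Fin m₂,
      (if Fin.castLE h₁ z.2 = Fin.castLE h₂ w.1
        then X (Fin.castLE h₂ w.2, Fin.castLE h₁ z.1) * u z
          * ((leadP (Xmat n) m₂ h₂ ^ b) w.1 w.2) else 0)
      = ((leadP (Xmat n) m₂ h₂ ^ (b + 1)) (Fin.castLE h12 z.2) (Fin.castLE h12 z.1)) * u z := by
    rw [Fintype.sum_prod_type]
    simp only [hc]
    rw [Finset.sum_comm]
    simp only [Finset.sum_ite_eq, Finset.mem_univ, if_true]
    rw [pow_succ, Matrix.mul_apply, Finset.sum_mul]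
    refine Finset.sum_congr rfl fun t _ => ?_
    have hx : X (σ := Fin n × Fin n) (R := ℂ) (Fin.castLE h₂ t, Fin.castLE h₁ z.1)
        = leadP (Xmat n) m₂ h₂ t (Fin.castLE h12 z.1) := rfl
    rw [hx]; ring
  rw [e1, e2]

lemma pb_anti {n : ℕ} (f g : R n) : poissonBracket f g + poissonBracket g f = 0 := by
  unfold poissonBracket
  rw [Finset.sum_comm, ← Finset.sum_add_distrib]
  refine Finset.sum_eq_zero fun o _ => ?_
  rw [← Finset.sum_add_distrib]
  refine Finset.sum_eq_zero fun i _ => ?_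
  by_cases hh1 : i.2 = o.1 <;> by_cases hh2 : i.1 = o.2 <;>
    simp [hh1, hh2, eq_comm, Ne.symm] <;> ring

lemma main_le {n : ℕ} (m₁ m₂ : ℕ) (h₁ : m₁ ≤ n) (h₂ : m₂ ≤ n) (h12 : m₁ ≤ m₂)
    (k₁ k₂ : ℕ) (hk₁ : 1 ≤ k₁) (hk₂ : 1 ≤ k₂) :
    poissonBracket ((leadP (Xmat n) m₁ h₁ ^ k₁).trace)
        ((leadP (Xmat n) m₂ h₂ ^ k₂).trace) = 0 := by
  obtain ⟨a, rfl⟩ : ∃ a, k₁ = a + 1 := ⟨k₁ - 1, by omega⟩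
  obtain ⟨b, rfl⟩ : ∃ b, k₂ = b + 1 := ⟨k₂ - 1, by omega⟩
  unfold poissonBracket
  simp only [pd_trace_leadP]
  simp only [smul_mul_assoc, mul_smul_comm, ← Finset.smul_sum]
  rw [key (fun p q => ((if p.2 = q.1 then MvPolynomial.X (p.1, q.2) else 0) -
      (if p.1 = q.2 then MvPolynomial.X (q.1, p.2) else 0)))
    (fun z : Fin m₁ × Fin m₁ => (Fin.castLE h₁ z.2, Fin.castLE h₁ z.1))
    (fun w : Fin m₂ × Fin m₂ => (Fin.castLE h₂ w.2, Fin.castLE h₂ w.1))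
    (fun z => (leadP (Xmat n) m₁ h₁ ^ a) z.1 z.2)
    (fun w => (leadP (Xmat n) m₂ h₂ ^ b) w.1 w.2)]
  rw [show (∑ z : Fin m₁ × Fin m₁, ∑ w : Fin m₂ × Fin m₂, _) = (0 : R n) from
    crux h₁ h₂ h12 (fun z => (leadP (Xmat n) m₁ h₁ ^ a) z.1 z.2) b]
  simp


/-- The Gelfand–Zeitlin functions `tr((x_m)^k)` pairwise Poisson-commute. -/
theorem gelfandZeitlin_poisson_commute {n : ℕ}
    (m₁ m₂ : ℕ) (h₁ : m₁ ≤ n) (h₂ : m₂ ≤ n) (k₁ k₂ : ℕ)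
    (hk₁ : 1 ≤ k₁) (hk₂ : 1 ≤ k₂) :
    poissonBracket ((leadP (Xmat n) m₁ h₁ ^ k₁).trace)
        ((leadP (Xmat n) m₂ h₂ ^ k₂).trace) = 0 := by
  rcases le_total m₁ m₂ with h12 | h21
  · exact main_le m₁ m₂ h₁ h₂ h12 k₁ k₂ hk₁ hk₂
  · have h := pb_anti ((leadP (Xmat n) m₁ h₁ ^ k₁).trace) ((leadP (Xmat n) m₂ h₂ ^ k₂).trace)
    rw [main_le m₂ m₁ h₂ h₁ h21 k₂ k₁ hk₂ hk₁] at h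
    simpa using h
end

section
/- Let Λ_m ∈ M(m, ℂ) and Λ_{m+1} ∈ M(m+1, ℂ) be diagonal matrices, all m + (m+1) diagonal entries pairwise distinct, and c ∈ ℂ^m with all entries nonzero. Define g ∈ M(m+1, ℂ) by g_{ij} = -c_i/( (Λ_m)_{ii} - (Λ_{m+1})_{jj} ) for 1 ≤ i ≤ m, and g_{m+1,j} = 1, for 1 ≤ j ≤ m+1. Then g is invertible, and the matrix g Λ_{m+1} g^{-1} has leading principal m×m submatrix equal to Λ_m, first m entries of its last column equal to c, and the entries b of its last row satisfy b_i c_i = -P_{m+1}(μ_i)/P_m'(μ_i), where μ_i = (Λ_m)_{ii}, P_m(λ) = ∏_i (λ - μ_i), and P_{m+1}(λ) = ∏_j (λ - (Λ_{m+1})_{jj}). -/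
open Matrix Polynomial Finset

/-! The vector with entries `c_i / (λ - μ_i)` and last entry `1` is an eigenvector, for the
eigenvalue `λ`, of the arrow matrix with diagonal `μ`, last column `c`, last row `b` and corner
`t` as soon as the secular equation `t + ∑ b_i c_i / (λ - μ_i) = λ` holds. With
`b_i c_i = -P_{m+1}(μ_i) / P_m'(μ_i)` and `t = ∑ ν - ∑ μ` it holds at every `λ = ν_j`: the
polynomial `P_{m+1} / (X - ν_j) - P_m` has degree `< m`, and its coefficient of `X^{m-1}` computed
by Lagrange interpolation at the nodes `μ` is exactly that sum. So the columns of `g` are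
eigenvectors for the distinct eigenvalues `ν_j`, hence `g` is invertible and `g Λ_{m+1} g⁻¹` is
the arrow matrix. -/

theorem Lagrange.sum_eval_nodal_div_prod_sub {F ι κ : Type*} [Field F] [DecidableEq ι]
    {s : Finset ι} {v : ι → F} (hvs : Set.InjOn v s) {t : Finset κ} (w : κ → F) (hts : #t = #s) :
    ∑ i ∈ s, (nodal t w).eval (v i) / ∏ j ∈ s.erase i, (v i - v j) =
      ∑ i ∈ s, v i - ∑ k ∈ t, w k := by
  rcases s.eq_empty_or_nonempty with rfl | hs
  · simp [card_eq_zero.mp hts]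
  have hdeg : (nodal t w - nodal s v).degree < #s := by
    have h := degree_sub_lt_left (p := nodal t w) (q := nodal s v) (by simp [degree_nodal, hts])
      nodal_ne_zero (by simp only [nodal_monic, Monic.leadingCoeff])
    rwa [degree_nodal, hts] at h
  calc ∑ i ∈ s, (nodal t w).eval (v i) / ∏ j ∈ s.erase i, (v i - v j)
      = ∑ i ∈ s, (nodal t w - nodal s v).eval (v i) / ∏ j ∈ s.erase i, (v i - v j) :=
        sum_congr rfl fun i hi => by rw [eval_sub, eval_nodal_at_node hi, sub_zero]
    _ = (nodal t w - nodal s v).coeff (#s - 1) := (coeff_eq_sum hvs hdeg).symm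
    _ = ∑ i ∈ s, v i - ∑ k ∈ t, w k := by
        rw [coeff_sub, nodal, nodal, prod_X_sub_C_coeff_card_pred s v hs.card_pos, ← hts,
          prod_X_sub_C_coeff_card_pred t w (hts ▸ hs.card_pos)]
        ring

theorem sum_prod_sub_div_prod_sub_mul_sub {F ι κ : Type*} [Field F] [Fintype ι] [DecidableEq ι]
    [Fintype κ] [DecidableEq κ] {μ : ι → F} (hμ : Function.Injective μ) {ν : κ → F}
    (hcard : Fintype.card κ = Fintype.card ι + 1) (hμν : ∀ i j, μ i ≠ ν j) (j : κ) :
    ∑ i, (∏ k, (μ i - ν k)) / ((∏ k ∈ univ.erase i, (μ i - μ k)) * (μ i - ν j)) =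
      ∑ i, μ i - ∑ k, ν k + ν j := by
  have hsum := Lagrange.sum_eval_nodal_div_prod_sub (s := univ) hμ.injOn (t := univ.erase j) ν
    (by simp [card_erase_of_mem, hcard])
  rw [show ∑ i, μ i - ∑ k, ν k + ν j = ∑ i, μ i - ∑ k ∈ univ.erase j, ν k by
    rw [← add_sum_erase _ _ (mem_univ j)]; ring, ← hsum]
  refine sum_congr rfl fun i _ => ?_
  rw [Lagrange.eval_nodal, ← mul_prod_erase _ _ (mem_univ j), mul_comm (∏ k ∈ univ.erase i, _)]
  field_simp [sub_ne_zero.mpr (hμν i j)]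

section ArrowMatrix

variable {R : Type*} {m : ℕ}

/-- The arrow matrix with diagonal `d`, last column `c`, last row `b` and corner entry `t`. -/
def arrowMatrix [Zero R] (d c b : Fin m → R) (t : R) : Matrix (Fin (m + 1)) (Fin (m + 1)) R :=
  Matrix.of fun p q => Fin.lastCases (Fin.lastCases t b q)
    (fun i => Fin.lastCases (c i) (fun j => diagonal d i j) q) p

variable [Zero R] (d c b : Fin m → R) (t : R)

@[simp]
theorem arrowMatrix_castSucc_castSucc (i j : Fin m) :
    arrowMatrix d c b t i.castSucc j.castSucc = diagonal d i j := by
  simp [arrowMatrix]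

@[simp]
theorem arrowMatrix_castSucc_last (i : Fin m) :
    arrowMatrix d c b t i.castSucc (Fin.last m) = c i := by
  simp [arrowMatrix]

@[simp]
theorem arrowMatrix_last_castSucc (j : Fin m) :
    arrowMatrix d c b t (Fin.last m) j.castSucc = b j := by
  simp [arrowMatrix]

@[simp]
theorem arrowMatrix_last_last : arrowMatrix d c b t (Fin.last m) (Fin.last m) = t := by
  simp [arrowMatrix]

end ArrowMatrix

theorem arrowMatrix_mulVec_eq_smul {K : Type*} [Field K] {m : ℕ} {d c b : Fin m → K} {t l : K}
    {v : Fin (m + 1) → K} (hd : ∀ i, d i ≠ l) (hv : ∀ i, v i.castSucc = -c i / (d i - l))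
    (hv1 : v (Fin.last m) = 1) (hl : t + ∑ i, b i * v i.castSucc = l) :
    arrowMatrix d c b t *ᵥ v = l • v := by
  ext p
  induction p using Fin.lastCases with
  | last => simp [mulVec, dotProduct, Fin.sum_univ_castSucc, hv1, ← hl, add_comm]
  | cast i =>
    simp only [mulVec, dotProduct, Fin.sum_univ_castSucc, arrowMatrix_castSucc_castSucc,
      arrowMatrix_castSucc_last, diagonal_apply, ite_mul, zero_mul, sum_ite_eq, mem_univ, if_true,
      hv, hv1, Pi.smul_apply, smul_eq_mul]
    field_simp [sub_ne_zero.mpr (hd i)]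
    ring

namespace Matrix

variable {n K : Type*} [Fintype n] [DecidableEq n] [Field K] {A g : Matrix n n K} {ν : n → K}

theorem mul_eq_mul_diagonal_of_mulVec_col_eq_smul (h : ∀ j, A *ᵥ g.col j = ν j • g.col j) :
    A * g = g * diagonal ν := by
  ext i j
  rw [mul_diagonal]
  simpa [mul_apply, mulVec, dotProduct, mul_comm] using congrFun (h j) i

theorem isUnit_of_mulVec_col_eq_smul (hν : Function.Injective ν) (hg : ∀ j, g.col j ≠ 0)
    (h : ∀ j, A *ᵥ g.col j = ν j • g.col j) : IsUnit g :=
  linearIndependent_cols_iff_isUnit.mp <|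
    Module.End.eigenvectors_linearIndependent' (toLin' A) ν hν g.col fun j =>
      ⟨Module.End.mem_eigenspace_iff.mpr (h j), hg j⟩

end Matrix

/-- Inverse spectral construction of an arrow matrix: the matrix `g` of Cauchy-type
candidate eigenvectors (normalized to last entry `1`) is invertible, and
`g Λ_{m+1} g⁻¹` has top-left block `Λ_m`, last column `c`, and last-row entries `b`
with `b_i c_i = -P_{m+1}(μ_i)/P_m'(μ_i)`. -/
theorem inverse_spectral_arrow_construction {m : ℕ}
    (μ : Fin m → ℂ) (ν : Fin (m + 1) → ℂ)
    (hμ : Function.Injective μ) (hν : Function.Injective ν)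
    (hμν : ∀ (i : Fin m) (j : Fin (m + 1)), μ i ≠ ν j)
    (c : Fin m → ℂ) (hc : ∀ i, c i ≠ 0)
    (g : Matrix (Fin (m + 1)) (Fin (m + 1)) ℂ)
    (hg : ∀ (i : Fin m) (j : Fin (m + 1)),
      g i.castSucc j = -c i / (μ i - ν j))
    (hg1 : ∀ j : Fin (m + 1), g (Fin.last m) j = 1) :
    IsUnit g ∧
    (∀ i j : Fin m,
      (g * Matrix.diagonal ν * g⁻¹) i.castSucc j.castSucc =
        if i = j then μ i else 0) ∧
    (∀ i : Fin m, (g * Matrix.diagonal ν * g⁻¹) i.castSucc (Fin.last m) = c i) ∧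
    (∀ i : Fin m,
      (g * Matrix.diagonal ν * g⁻¹) (Fin.last m) i.castSucc * c i =
        -(∏ j : Fin (m + 1), (μ i - ν j)) /
          (∏ j ∈ univ.erase i, (μ i - μ j))) := by
  have hdiff (i : Fin m) : ∏ k ∈ univ.erase i, (μ i - μ k) ≠ 0 :=
    prod_ne_zero_iff.mpr fun k hk => sub_ne_zero.mpr (hμ.ne (ne_of_mem_erase hk).symm)
  set b : Fin m → ℂ := fun i => -(∏ j, (μ i - ν j)) / ((∏ k ∈ univ.erase i, (μ i - μ k)) * c i)
  set A := arrowMatrix μ c b (∑ j, ν j - ∑ i, μ i)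
  have heigen (j : Fin (m + 1)) : A *ᵥ g.col j = ν j • g.col j := by
    refine arrowMatrix_mulVec_eq_smul (hμν · j) (hg · j) (hg1 j) ?_
    have hterm (i : Fin m) : b i * (-c i / (μ i - ν j)) =
        (∏ k, (μ i - ν k)) / ((∏ k ∈ univ.erase i, (μ i - μ k)) * (μ i - ν j)) := by
      simp only [b]
      field_simp [hc i, hdiff i, sub_ne_zero.mpr (hμν i j)]
    simp only [col_apply, hg, hterm, sum_prod_sub_div_prod_sub_mul_sub hμ (by simp) hμν j]
    ring
  have hunit : IsUnit g := isUnit_of_mulVec_col_eq_smul hν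
    (fun j h0 => one_ne_zero ((hg1 j).symm.trans (congrFun h0 (Fin.last m)))) heigen
  have hconj : g * diagonal ν * g⁻¹ = A := by
    rw [← mul_eq_mul_diagonal_of_mulVec_col_eq_smul heigen, Matrix.mul_assoc,
      mul_nonsing_inv g ((isUnit_iff_isUnit_det g).mp hunit), Matrix.mul_one]
  refine ⟨hunit, fun i j => ?_, fun i => ?_, fun i => ?_⟩
  · simp [hconj, A, diagonal_apply]
  · simp [hconj, A]
  · simp only [hconj, A, arrowMatrix_last_castSucc, b]
    field_simp [hc i, hdiff i]
end
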